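/- arXiv:1511.01032 — 4 statements merged into one kernel-verified Lean document; each statement's English description precedes it below -/
import Mathlib

section
/- For every n > 2 and every φ in the open probability simplex, the Markov chain with transition matrix P is aperiodic: for every state i, the set of return times S i = {m : ℕ | 1 ≤ m ∧ (P^m) i i > 0} has greatest common divisor 1, i.e. every natural number d that divides all elements of S i equals 1. -/
/-- Theorem 1 of the TribeFlow paper (aperiodicity part): for `n > 2` and `φ` in the open
probability simplex, the set of return times of the chain to any state `i` has gcd `1`:
every natural number dividing all return times equals `1`. -/
theorem tribeflow_aperiodic (n : ℕ) (hn : 2 < n) (φ : Fin n → ℝ)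
    (hφpos : ∀ i, 0 < φ i) (hφsum : ∑ i, φ i = 1)
    (P : Matrix (Fin n) (Fin n) ℝ)
    (hP : ∀ i j, P i j = if i = j then 0 else φ j / (1 - φ i)) :
    ∀ i, ∀ d : ℕ, (∀ m ∈ {m : ℕ | 1 ≤ m ∧ 0 < (P ^ m) i i}, d ∣ m) → d = 1 := by
  haveI : Nontrivial (Fin n) := Fin.nontrivial_iff_two_le.mpr (by omega)
  -- each φ i < 1
  have hlt : ∀ i : Fin n, φ i < 1 := by
    intro i
    obtain ⟨j, hj⟩ := exists_ne i
    calc φ i < ∑ k, φ k := by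
            refine Finset.single_lt_sum hj (Finset.mem_univ i) (Finset.mem_univ j)
              (hφpos j) ?_
            intro k _ _; exact (hφpos k).le
      _ = 1 := hφsum
  have hPpos : ∀ i j : Fin n, i ≠ j → 0 < P i j := by
    intro i j h
    rw [hP i j, if_neg h]
    exact div_pos (hφpos j) (by linarith [hlt i])
  have hPnn : ∀ i j : Fin n, 0 ≤ P i j := by
    intro i j
    rcases eq_or_ne i j with h | h
    · rw [hP, if_pos h]
    · exact (hPpos i j h).le
  -- existence of a third element
  have hthird : ∀ i k : Fin n, ∃ j : Fin n, j ≠ i ∧ j ≠ k := by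
    intro i k
    by_contra h
    push_neg at h
    have hsub : (Finset.univ : Finset (Fin n)) ⊆ {i, k} := by
      intro x _
      rcases eq_or_ne x i with hx | hx
      · simp [hx]
      · simp [h x hx]
    have h1 := Finset.card_le_card hsub
    have h2 : ({i, k} : Finset (Fin n)).card ≤ 2 :=
      (Finset.card_insert_le _ _).trans (by simp)
    simp [Finset.card_univ] at h1
    omega
  intro i d hd
  -- (P^2) i i > 0
  have h2 : 0 < (P ^ 2) i i := by
    obtain ⟨j, hj⟩ := exists_ne i
    rw [pow_two, Matrix.mul_apply]
    refine Finset.sum_pos' (fun k _ => mul_nonneg (hPnn i k) (hPnn k i)) ?_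
    exact ⟨j, Finset.mem_univ j, mul_pos (hPpos i j (Ne.symm hj)) (hPpos j i hj)⟩
  -- (P^2) i k > 0 for any k
  have h2' : ∀ k : Fin n, 0 < (P ^ 2) i k := by
    intro k
    obtain ⟨j, hji, hjk⟩ := hthird i k
    rw [pow_two, Matrix.mul_apply]
    refine Finset.sum_pos' (fun l _ => mul_nonneg (hPnn i l) (hPnn l k)) ?_
    exact ⟨j, Finset.mem_univ j, mul_pos (hPpos i j (Ne.symm hji)) (hPpos j k hjk)⟩
  have h3 : 0 < (P ^ 3) i i := by
    obtain ⟨j, hj⟩ := exists_ne i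
    have : (P ^ 3) = (P ^ 2) * P := pow_succ P 2
    rw [this, Matrix.mul_apply]
    refine Finset.sum_pos' (fun k _ => mul_nonneg (h2' k).le (hPnn k i)) ?_
    exact ⟨j, Finset.mem_univ j, mul_pos (h2' j) (hPpos j i hj)⟩
  have hd2 : d ∣ 2 := hd 2 ⟨by norm_num, h2⟩
  have hd3 : d ∣ 3 := hd 3 ⟨by norm_num, h3⟩
  have : d ∣ 1 := by
    have := Nat.dvd_sub hd3 hd2
    simpa using this
  exact Nat.dvd_one.mp this
end

section
/- For every n ≥ 2 and every φ in the open probability simplex, the vector π defined by π i = φ i * (1 - φ i) / (∑ k, φ k * (1 - φ k)) is a stationary probability distribution of the Markov chain with transition matrix P: π i > 0 for all i, ∑ i, π i = 1, and for every j, ∑ i, π i * P i j = π j. -/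
/-- Theorem 1 of the TribeFlow paper (stationarity part): the vector
`π i = φ i * (1 - φ i) / ∑ k, φ k * (1 - φ k)` is a stationary probability distribution
of the chain with transition matrix `P`. -/
theorem tribeflow_stationary (n : ℕ) (hn : 2 ≤ n) (φ : Fin n → ℝ)
    (hφpos : ∀ i, 0 < φ i) (hφsum : ∑ i, φ i = 1)
    (P : Matrix (Fin n) (Fin n) ℝ)
    (hP : ∀ i j, P i j = if i = j then 0 else φ j / (1 - φ i))
    (π : Fin n → ℝ)
    (hπ : ∀ i, π i = φ i * (1 - φ i) / (∑ k, φ k * (1 - φ k))) :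
    (∀ i, 0 < π i) ∧ (∑ i, π i = 1) ∧ (∀ j, ∑ i, π i * P i j = π j) := by
  haveI : Nonempty (Fin n) := Fin.pos_iff_nonempty.mp (by omega)
  have hlt : ∀ i, φ i < 1 := by
    intro i
    obtain ⟨j, hj⟩ : ∃ j, j ≠ i := by
      by_cases h : i = ⟨0, by omega⟩
      · exact ⟨⟨1, by omega⟩, by simp [h, Fin.ext_iff]⟩
      · exact ⟨⟨0, by omega⟩, fun hc => h hc.symm⟩
    calc φ i < ∑ k, φ k :=
          Finset.single_lt_sum hj (Finset.mem_univ i) (Finset.mem_univ j)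
            (hφpos j) (fun k _ _ => (hφpos k).le)
      _ = 1 := hφsum
  have hSpos : 0 < ∑ k, φ k * (1 - φ k) :=
    Finset.sum_pos (fun k _ => mul_pos (hφpos k) (by linarith [hlt k]))
      Finset.univ_nonempty
  have hπpos : ∀ i, 0 < π i := fun i => by
    rw [hπ i]
    exact div_pos (mul_pos (hφpos i) (by linarith [hlt i])) hSpos
  refine ⟨hπpos, ?_, ?_⟩
  · have : ∑ i, π i = (∑ i, φ i * (1 - φ i)) / (∑ k, φ k * (1 - φ k)) := by
      rw [Finset.sum_div]; exact Finset.sum_congr rfl fun i _ => hπ i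
    rw [this, div_self hSpos.ne']
  · intro j
    have key : ∀ i, π i * P i j =
        if i = j then 0 else φ i * φ j / (∑ k, φ k * (1 - φ k)) := by
      intro i
      rw [hπ i, hP i j]
      by_cases h : i = j
      · simp [h]
      · rw [if_neg h, if_neg h]
        have h1 : (1 : ℝ) - φ i ≠ 0 := by linarith [hlt i]
        field_simp
    rw [Finset.sum_congr rfl fun i _ => key i]
    rw [Finset.sum_ite, Finset.sum_const_zero, zero_add, ← Finset.sum_div,
      ← Finset.sum_mul]
    have hfilter : Finset.univ.filter (fun i => ¬ i = j) = Finset.univ.erase j := by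
      ext x; simp [Finset.mem_erase, and_comm]
    rw [hfilter, Finset.sum_erase_eq_sub (Finset.mem_univ j), hφsum, hπ j]
    ring
end

section
/- For every n > 2 and every φ in the open probability simplex, the stationary distribution of the Markov chain with transition matrix P is unique: if ν : Fin n → ℝ satisfies ν i ≥ 0 for all i, ∑ i, ν i = 1, and ∑ i, ν i * P i j = ν j for every j, then ν = π, where π i = φ i * (1 - φ i) / (∑ k, φ k * (1 - φ k)). -/
/-- Theorem 1 of the TribeFlow paper (uniqueness of the stationary distribution): for
`n > 2` and `φ` in the open probability simplex, any stationary probability distribution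
`ν` of the chain with transition matrix `P` equals `π`. -/
theorem tribeflow_stationary_unique (n : ℕ) (hn : 2 < n) (φ : Fin n → ℝ)
    (hφpos : ∀ i, 0 < φ i) (hφsum : ∑ i, φ i = 1)
    (P : Matrix (Fin n) (Fin n) ℝ)
    (hP : ∀ i j, P i j = if i = j then 0 else φ j / (1 - φ i))
    (π : Fin n → ℝ)
    (hπ : ∀ i, π i = φ i * (1 - φ i) / (∑ k, φ k * (1 - φ k)))
    (ν : Fin n → ℝ)
    (hνnonneg : ∀ i, 0 ≤ ν i) (hνsum : ∑ i, ν i = 1)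
    (hνstat : ∀ j, ∑ i, ν i * P i j = ν j) :
    ν = π := by
  have hlt : ∀ i, φ i < 1 := by
    intro i
    obtain ⟨j, hj⟩ : ∃ j : Fin n, j ≠ i := by
      rcases eq_or_ne i ⟨0, by omega⟩ with h | h
      · exact ⟨⟨1, by omega⟩, by simp [h, Fin.ext_iff]⟩
      · exact ⟨⟨0, by omega⟩, fun hh => h hh.symm⟩
    calc φ i < ∑ k, φ k :=
        Finset.single_lt_sum hj (Finset.mem_univ i) (Finset.mem_univ j) (hφpos j)
          (fun k _ _ => (hφpos k).le)
      _ = 1 := hφsum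
  have hpos : ∀ i, 0 < 1 - φ i := fun i => by linarith [hlt i]
  have hne : ∀ i, (1 : ℝ) - φ i ≠ 0 := fun i => (hpos i).ne'
  set D : ℝ := ∑ k, φ k * (1 - φ k) with hD
  have hDpos : 0 < D := by
    apply Finset.sum_pos
    · intro k _; exact mul_pos (hφpos k) (hpos k)
    · haveI : Nonempty (Fin n) := ⟨⟨0, by omega⟩⟩; exact Finset.univ_nonempty
  set S : ℝ := ∑ i, ν i / (1 - φ i) with hS
  have key : ∀ j, ν j = φ j * (1 - φ j) * S := by
    intro j
    have h := hνstat j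
    have step : ∀ i : Fin n, ν i * P i j =
        φ j * (ν i / (1 - φ i)) - (if i = j then φ j * (ν i / (1 - φ i)) else 0) := by
      intro i
      rw [hP]
      split <;> ring
    rw [Finset.sum_congr rfl (fun i _ => step i), Finset.sum_sub_distrib,
      ← Finset.mul_sum, Finset.sum_ite_eq' Finset.univ j] at h
    simp only [Finset.mem_univ, if_true, ← hS] at h
    have hnej := hne j
    field_simp at h ⊢
    linarith [h]
  have hSum : D * S = 1 := by
    rw [← hνsum, Finset.sum_congr rfl fun i _ => key i, ← Finset.sum_mul, hD]
  funext j
  rw [key j, hπ j]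
  have : S = 1 / D := by field_simp at hSum ⊢; linarith
  rw [this]
  field_simp
end

section
/- For every n > 2 and every φ in the open probability simplex, the Markov chain with transition matrix P is ergodic in the sense that its m-step transition probabilities converge to the stationary distribution independently of the starting state: for all states i and j, the sequence (P^m) i j tends to π j as m → ∞, where π j = φ j * (1 - φ j) / (∑ k, φ k * (1 - φ k)). -/
/-!
`P` is a row-stochastic matrix whose square is entrywise positive (for `n > 2` every pair of
states is joined by a path through a third one), and `π` is stationary for `P` by detailed
balance: `π k * P k j = φ k * φ j / ∑ l, φ l * (1 - φ l)` is symmetric in `k, j`.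
Writing `(P ^ 2) i k ≥ δ > 0`, Doeblin's argument shows that `P ^ 2` contracts the oscillation
`max f - min f` of every vector `f` by the factor `1 - n δ < 1`, while `P` does not increase it.
Hence `P ^ m *ᵥ f` becomes constant at a geometric rate, and stationarity identifies the
constant as `π ⬝ᵥ f`; taking `f` the `j`-th basis vector gives `(P ^ m) i j → π j`.
-/

open Filter Topology Finset Matrix

section Oscillation

variable {ι : Type*} [Fintype ι] [Nonempty ι]

noncomputable def osc (f : ι → ℝ) : ℝ :=
  univ.sup' univ_nonempty f - univ.inf' univ_nonempty f

lemma sub_le_osc (f : ι → ℝ) (k l : ι) : f k - f l ≤ osc f :=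
  sub_le_sub (le_sup' f (mem_univ k)) (inf'_le f (mem_univ l))

lemma osc_le_of_forall_sub_le {f : ι → ℝ} {c : ℝ} (h : ∀ k l, f k - f l ≤ c) :
    osc f ≤ c := by
  obtain ⟨k, -, hk⟩ := exists_mem_eq_sup' univ_nonempty f
  obtain ⟨l, -, hl⟩ := exists_mem_eq_inf' univ_nonempty f
  rw [osc, hk, hl]
  exact h k l

lemma abs_sub_dotProduct_le {w : ι → ℝ} (hw : ∑ l, w l = 1) (f : ι → ℝ) (k : ι) :
    |f k - w ⬝ᵥ f| ≤ (∑ l, |w l|) * osc f := by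
  have hdiff : f k - w ⬝ᵥ f = ∑ l, w l * (f k - f l) := by
    simp only [mul_sub, sum_sub_distrib, ← sum_mul, hw, one_mul, dotProduct]
  rw [hdiff, sum_mul]
  refine (abs_sum_le_sum_abs _ _).trans (sum_le_sum fun l _ => ?_)
  rw [abs_mul]
  exact mul_le_mul_of_nonneg_left (abs_sub_le_iff.2 ⟨sub_le_osc f k l, sub_le_osc f l k⟩)
    (abs_nonneg _)

variable {Q : Matrix ι ι ℝ} {δ : ℝ}

lemma one_sub_card_mul_nonneg (hrow : ∀ i, ∑ k, Q i k = 1) (hδ : ∀ i k, δ ≤ Q i k) :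
    0 ≤ 1 - Fintype.card ι * δ := by
  obtain ⟨i⟩ := ‹Nonempty ι›
  have := sum_le_sum fun k (_ : k ∈ univ) => hδ i k
  rw [sum_const, hrow, card_univ, nsmul_eq_mul] at this
  linarith

lemma osc_mulVec_le (hrow : ∀ i, ∑ k, Q i k = 1) (hδ : ∀ i k, δ ≤ Q i k) (f : ι → ℝ) :
    osc (Q *ᵥ f) ≤ (1 - Fintype.card ι * δ) * osc f := by
  have hmass : ∀ i, ∑ k, (Q i k - δ) = 1 - Fintype.card ι * δ := fun i => by
    rw [sum_sub_distrib, hrow, sum_const, card_univ, nsmul_eq_mul]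
  have hsplit : ∀ i, (Q *ᵥ f) i = ∑ k, (Q i k - δ) * f k + δ * ∑ k, f k := fun i => by
    simp only [mulVec, dotProduct, sub_mul, sum_sub_distrib, mul_sum]
    ring
  refine osc_le_of_forall_sub_le fun a b => ?_
  have upper :
      ∑ k, (Q a k - δ) * f k ≤ (1 - Fintype.card ι * δ) * univ.sup' univ_nonempty f := by
    rw [← hmass a, sum_mul]
    exact sum_le_sum fun k _ =>
      mul_le_mul_of_nonneg_left (le_sup' f (mem_univ k)) (sub_nonneg.2 (hδ a k))
  have lower :
      (1 - Fintype.card ι * δ) * univ.inf' univ_nonempty f ≤ ∑ k, (Q b k - δ) * f k := by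
    rw [← hmass b, sum_mul]
    exact sum_le_sum fun k _ =>
      mul_le_mul_of_nonneg_left (inf'_le f (mem_univ k)) (sub_nonneg.2 (hδ b k))
  rw [hsplit, hsplit, osc, mul_sub]
  linarith

lemma osc_pow_mulVec_le [DecidableEq ι] (hrow : ∀ i, ∑ k, Q i k = 1) (hδ : ∀ i k, δ ≤ Q i k)
    (f : ι → ℝ) (t : ℕ) : osc (Q ^ t *ᵥ f) ≤ (1 - Fintype.card ι * δ) ^ t * osc f := by
  induction t with
  | zero => simp
  | succ t ih =>
    rw [pow_succ', ← mulVec_mulVec]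
    calc osc (Q *ᵥ (Q ^ t *ᵥ f)) ≤ (1 - Fintype.card ι * δ) * osc (Q ^ t *ᵥ f) :=
          osc_mulVec_le hrow hδ _
      _ ≤ (1 - Fintype.card ι * δ) * ((1 - Fintype.card ι * δ) ^ t * osc f) :=
          mul_le_mul_of_nonneg_left ih (one_sub_card_mul_nonneg hrow hδ)
      _ = (1 - Fintype.card ι * δ) ^ (t + 1) * osc f := by ring

end Oscillation

lemma vecMul_pow_eq_self {ι : Type*} [Fintype ι] [DecidableEq ι] {A : Matrix ι ι ℝ}
    {v : ι → ℝ} (hv : v ᵥ* A = v) (m : ℕ) : v ᵥ* A ^ m = v := by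
  induction m with
  | zero => simp
  | succ m ih => rw [pow_succ, ← vecMul_vecMul, ih, hv]

theorem tendsto_pow_mulVec_apply_of_pow_pos {ι : Type*} [Fintype ι] [DecidableEq ι]
    {P : Matrix ι ι ℝ} (hP : P ∈ rowStochastic ℝ ι) {p : ℕ} (hp : 0 < p)
    (hpos : ∀ i k, 0 < (P ^ p) i k) {π : ι → ℝ} (hπP : π ᵥ* P = π) (hπ : ∑ k, π k = 1)
    (f : ι → ℝ) (i : ι) : Tendsto (fun m => (P ^ m *ᵥ f) i) atTop (𝓝 (π ⬝ᵥ f)) := by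
  have : Nonempty ι := ⟨i⟩
  obtain ⟨δ, hδpos, hδ⟩ : ∃ δ > 0, ∀ i k, δ ≤ (P ^ p) i k :=
    ⟨univ.inf' univ_nonempty fun x : ι × ι => (P ^ p) x.1 x.2,
      (lt_inf'_iff _).2 fun x _ => hpos x.1 x.2, fun i k => inf'_le _ (mem_univ (i, k))⟩
  have hrow := sum_row_of_mem_rowStochastic (pow_mem hP p)
  set θ := 1 - Fintype.card ι * δ
  have hθ : θ < 1 := by
    have : 0 < (Fintype.card ι : ℝ) * δ := by positivity
    linarith
  have hosc : ∀ m, osc (P ^ m *ᵥ f) ≤ θ ^ (m / p) * osc f := fun m => by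
    rw [← Nat.mod_add_div m p, pow_add, pow_mul, ← mulVec_mulVec, Nat.add_mul_div_left _ _ hp,
      Nat.mod_div_self, zero_add]
    calc _ ≤ (1 - Fintype.card ι * 0) ^ (m % p) * osc ((P ^ p) ^ (m / p) *ᵥ f) :=
          osc_pow_mulVec_le (sum_row_of_mem_rowStochastic hP)
            (fun _ _ => nonneg_of_mem_rowStochastic hP) _ _
      _ ≤ θ ^ (m / p) * osc f := by simpa using osc_pow_mulVec_le hrow hδ f (m / p)
  have hlim : Tendsto (fun m => (∑ l, |π l|) * (θ ^ (m / p) * osc f)) atTop (𝓝 0) := by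
    have hθ0 := one_sub_card_mul_nonneg hrow hδ
    simpa using (((tendsto_pow_atTop_nhds_zero_of_lt_one hθ0 hθ).comp
      (Nat.tendsto_div_const_atTop hp.ne')).mul_const (osc f)).const_mul (∑ l, |π l|)
  rw [tendsto_iff_norm_sub_tendsto_zero]
  refine squeeze_zero (fun _ => norm_nonneg _) (fun m => ?_) hlim
  have hstat : π ⬝ᵥ f = π ⬝ᵥ (P ^ m *ᵥ f) := by
    rw [dotProduct_mulVec, vecMul_pow_eq_self hπP]
  rw [Real.norm_eq_abs, hstat]
  exact (abs_sub_dotProduct_le hπ _ i).trans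
    (mul_le_mul_of_nonneg_left (hosc m) (sum_nonneg fun _ _ => abs_nonneg _))

section TribeFlow

variable {ι : Type*} [Fintype ι] [DecidableEq ι] {φ : ι → ℝ}

noncomputable def tribeflowMatrix (φ : ι → ℝ) : Matrix ι ι ℝ :=
  of fun i j => if i = j then 0 else φ j / (1 - φ i)

noncomputable def tribeflowStationary (φ : ι → ℝ) : ι → ℝ :=
  fun i => φ i * (1 - φ i) / ∑ k, φ k * (1 - φ k)

lemma sum_erase_eq_one_sub (hφsum : ∑ i, φ i = 1) (i : ι) :
    ∑ k ∈ univ.erase i, φ k = 1 - φ i := by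
  rw [sum_erase_eq_sub (mem_univ i), hφsum]

lemma one_sub_pos_of_sum_eq_one (hφpos : ∀ i, 0 < φ i) (hφsum : ∑ i, φ i = 1)
    (hcard : 1 < Fintype.card ι) (i : ι) : 0 < 1 - φ i := by
  obtain ⟨l, hl⟩ := Fintype.exists_ne_of_one_lt_card hcard i
  rw [← sum_erase_eq_one_sub hφsum]
  exact sum_pos (fun k _ => hφpos k) ⟨l, mem_erase.2 ⟨hl, mem_univ l⟩⟩

lemma tribeflowMatrix_mem_rowStochastic (hφpos : ∀ i, 0 < φ i) (hφsum : ∑ i, φ i = 1)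
    (hcard : 1 < Fintype.card ι) : tribeflowMatrix φ ∈ rowStochastic ℝ ι := by
  have hsub := one_sub_pos_of_sum_eq_one hφpos hφsum hcard
  refine mem_rowStochastic_iff_sum.2 ⟨fun i j => ?_, fun i => ?_⟩
  · simp only [tribeflowMatrix, of_apply]
    split_ifs
    exacts [le_rfl, (div_pos (hφpos j) (hsub i)).le]
  · rw [← add_sum_erase _ _ (mem_univ i)]
    simp only [tribeflowMatrix, of_apply, ↓reduceIte, zero_add]
    rw [sum_congr rfl fun k hk => if_neg (ne_of_mem_erase hk).symm, ← sum_div,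
      sum_erase_eq_one_sub hφsum, div_self (hsub i).ne']

lemma tribeflowMatrix_sq_pos (hφpos : ∀ i, 0 < φ i) (hφsum : ∑ i, φ i = 1)
    (hcard : 2 < Fintype.card ι) (i k : ι) : 0 < (tribeflowMatrix φ ^ 2) i k := by
  have hsub := one_sub_pos_of_sum_eq_one hφpos hφsum (by omega)
  have hnonneg : ∀ a b, 0 ≤ tribeflowMatrix φ a b := fun _ _ =>
    nonneg_of_mem_rowStochastic (tribeflowMatrix_mem_rowStochastic hφpos hφsum (by omega))
  obtain ⟨l, -, hl⟩ := exists_mem_notMem_of_card_lt_card (card_le_two.trans_lt hcard :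
    #({i, k} : Finset ι) < #univ)
  simp only [mem_insert, mem_singleton, not_or] at hl
  rw [sq, mul_apply]
  refine sum_pos' (fun x _ => mul_nonneg (hnonneg _ _) (hnonneg _ _))
    ⟨l, mem_univ l, mul_pos ?_ ?_⟩
  · simpa [tribeflowMatrix, Ne.symm hl.1] using div_pos (hφpos l) (hsub i)
  · simpa [tribeflowMatrix, hl.2] using div_pos (hφpos k) (hsub l)

lemma vecMul_tribeflowStationary (hφpos : ∀ i, 0 < φ i) (hφsum : ∑ i, φ i = 1)
    (hcard : 1 < Fintype.card ι) :
    tribeflowStationary φ ᵥ* tribeflowMatrix φ = tribeflowStationary φ := by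
  have hsub := one_sub_pos_of_sum_eq_one hφpos hφsum hcard
  ext j
  have hbalance : ∀ k, tribeflowStationary φ k * tribeflowMatrix φ k j =
      if k = j then 0 else φ k * φ j / ∑ l, φ l * (1 - φ l) := fun k => by
    simp only [tribeflowStationary, tribeflowMatrix, of_apply]
    split_ifs
    · simp
    · field_simp [(hsub k).ne']
  simp only [vecMul, dotProduct, hbalance]
  rw [sum_ite, sum_const_zero, zero_add, filter_ne', ← sum_div, ← sum_mul,
    sum_erase_eq_one_sub hφsum, tribeflowStationary, mul_comm]

lemma sum_tribeflowStationary (hφpos : ∀ i, 0 < φ i) (hφsum : ∑ i, φ i = 1)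
    (hcard : 1 < Fintype.card ι) : ∑ k, tribeflowStationary φ k = 1 := by
  have hsub := one_sub_pos_of_sum_eq_one hφpos hφsum hcard
  have : Nonempty ι := Fintype.card_pos_iff.1 (by omega)
  have hS : 0 < ∑ k, φ k * (1 - φ k) :=
    sum_pos (fun k _ => mul_pos (hφpos k) (hsub k)) univ_nonempty
  simp only [tribeflowStationary]
  rw [← sum_div, div_self hS.ne']

end TribeFlow

/-- Theorem 1 of the TribeFlow paper (ergodicity): the `m`-step transition probabilities
of the chain with transition matrix `P` converge to the stationary distribution `π`
independently of the starting state. -/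
theorem tribeflow_ergodic (n : ℕ) (hn : 2 < n) (φ : Fin n → ℝ)
    (hφpos : ∀ i, 0 < φ i) (hφsum : ∑ i, φ i = 1)
    (P : Matrix (Fin n) (Fin n) ℝ)
    (hP : ∀ i j, P i j = if i = j then 0 else φ j / (1 - φ i))
    (π : Fin n → ℝ)
    (hπ : ∀ i, π i = φ i * (1 - φ i) / (∑ k, φ k * (1 - φ k))) :
    ∀ i j, Tendsto (fun m : ℕ => (P ^ m) i j) atTop (nhds (π j)) := by
  intro i j
  obtain rfl : P = tribeflowMatrix φ := Matrix.ext hP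
  obtain rfl : π = tribeflowStationary φ := funext hπ
  have hcard : 2 < Fintype.card (Fin n) := by rwa [Fintype.card_fin]
  have hcard' : 1 < Fintype.card (Fin n) := by omega
  simpa [mulVec_single_one] using tendsto_pow_mulVec_apply_of_pow_pos
    (tribeflowMatrix_mem_rowStochastic hφpos hφsum hcard') two_pos
    (tribeflowMatrix_sq_pos hφpos hφsum hcard) (vecMul_tribeflowStationary hφpos hφsum hcard')
    (sum_tribeflowStationary hφpos hφsum hcard') (Pi.single j 1) i
end
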